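/- The count N(d;0,0,0) of 2×2×2 non-negative integer arrays of total sum d with equal parallel slice sums in all three directions satisfies: if d ≡ 0 (mod 4) then 384 · N(d;0,0,0) = (d+4)²(d²+8d+24); if d ≡ 2 (mod 4) then 384 · N(d;0,0,0) = (d+2)(d+6)(d²+8d+28); and if d is odd then N(d;0,0,0) = 0. -/
import Mathlib


open Finset


def Bx (n : ℕ) : Finset ℕ := range (n+1)
lemma mem_Bx {n x : ℕ} : x ∈ Bx n ↔ x ≤ n := by simp [Bx, Nat.lt_succ_iff]
lemma card_Bx (n : ℕ) : (Bx n).card = n+1 := card_range _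

lemma card_filter_prod {α β : Type*} (s : Finset α) (t : Finset β) (P : α × β → Prop)
    [DecidablePred P] :
    ((s ×ˢ t).filter P).card = ∑ a ∈ s, ((t.filter (fun b => P (a, b)))).card := by
  rw [Finset.card_filter, Finset.sum_product]
  simp only [Finset.card_filter]

lemma filter_prod_left {α β : Type*} (s : Finset α) (t : Finset β) (P : α → Prop)
    [DecidablePred P] :
    (s ×ˢ t).filter (fun q => P q.1) = (s.filter P) ×ˢ t := by
  ext ⟨a, b⟩; simp only [mem_filter, mem_product]; tauto

lemma gauss1 : ∀ k : ℕ, 2 * ∑ j ∈ range k, (j+1) = k*(k+1) := by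
  intro k
  induction k with
  | zero => simp
  | succ k ih => rw [sum_range_succ, mul_add, ih]; ring

lemma gauss3 : ∀ k : ℕ, ∑ x ∈ range k, 3*((x+1)*(x+2)) = k*(k+1)*(k+2) := by
  intro k
  induction k with
  | zero => simp
  | succ k ih => rw [sum_range_succ, ih]; ring

def Tri2 (n : ℕ) : ℕ := ((Bx n ×ˢ Bx n).filter (fun p => p.1 + p.2 ≤ n)).card

lemma tri2_closed (n : ℕ) : 2 * Tri2 n = (n+1)*(n+2) := by
  have h : Tri2 n = ∑ x ∈ range (n+1), (n+1-x) := by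
    rw [Tri2, card_filter_prod]
    apply sum_congr rfl
    intro x hx
    rw [show (Bx n).filter (fun b => (x, b).1 + (x, b).2 ≤ n) = range (n+1-x) by
      ext y; simp only [mem_filter, mem_range, mem_Bx]; omega]
    exact card_range _
  rw [h, ← Finset.sum_range_reflect]
  rw [sum_congr rfl (fun j hj => show (n+1 - (n+1-1-j)) = j+1 by
    simp only [mem_range] at hj; omega)]
  exact gauss1 (n+1)

def TetS (k : ℕ) : ℕ := ((Bx k ×ˢ Bx k ×ˢ Bx k).filter
  (fun p => p.1 + p.2.1 + p.2.2 ≤ k)).card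

lemma tetS_closed (k : ℕ) : 6 * TetS k = (k+1)*(k+2)*(k+3) := by
  have h : TetS k = ∑ x ∈ range (k+1), Tri2 (k - x) := by
    rw [TetS, card_filter_prod]
    apply sum_congr rfl
    intro x hx
    simp only [Bx, mem_range, mem_Bx, Nat.lt_succ_iff] at hx
    show ((Bx k ×ˢ Bx k).filter (fun b => x + b.1 + b.2 ≤ k)).card = _
    rw [Tri2, show (Bx k ×ˢ Bx k).filter (fun b => x + b.1 + b.2 ≤ k)
        = (Bx (k-x) ×ˢ Bx (k-x)).filter (fun p => p.1 + p.2 ≤ k - x) by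
      ext ⟨a, b⟩
      simp only [mem_filter, mem_product, mem_Bx]
      omega]
  rw [h, mul_sum]
  rw [sum_congr rfl (fun x hx => show 6 * Tri2 (k-x) = 3*((k-x+1)*(k-x+2)) by
    have := tri2_closed (k-x); omega)]
  rw [← Finset.sum_range_reflect]
  rw [sum_congr rfl (fun j hj => show 3*((k - (k+1-1-j)+1)*(k-(k+1-1-j)+2)) = 3*((j+1)*(j+2)) by
    simp only [mem_range] at hj
    have h1 : k - (k+1-1-j) = j := by omega
    rw [h1])]
  rw [gauss3 (k+1)]

def Wc (n : ℕ) : ℕ := ((Bx n ×ˢ Bx n).filter (fun p => n+1 ≤ p.1 + p.2)).card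
def Pyr (n : ℕ) : ℕ := ∑ x ∈ range (n+1), x*x
def TS (n : ℕ) : ℕ := ((Bx n ×ˢ Bx n ×ˢ Bx n).filter
  (fun p => p.1 + p.2.1 ≤ n ∧ p.1 + p.2.2 ≤ n ∧ p.2.1 + p.2.2 ≤ n)).card

lemma gauss0 : ∀ k : ℕ, 2 * ∑ x ∈ range (k+1), x = k*(k+1) := by
  intro k
  induction k with
  | zero => simp
  | succ k ih => rw [sum_range_succ, mul_add, ih]; ring

lemma cnt_lemma (n x : ℕ) (hx : x ≤ n) :
    ((Bx n).filter (fun y => n+1 ≤ x + y)).card = x := by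
  rw [show (Bx n).filter (fun y => n+1 ≤ x + y) = Icc (n+1-x) n by
    ext y; simp only [mem_filter, mem_Bx, mem_Icc]; omega]
  rw [Nat.card_Icc]; omega

lemma wc_sum (n : ℕ) : Wc n = ∑ x ∈ range (n+1), x := by
  rw [Wc, card_filter_prod]
  apply sum_congr rfl
  intro x hx
  simp only [Bx, mem_range, Nat.lt_succ_iff] at hx
  exact cnt_lemma n x hx

lemma w_closed (n : ℕ) : 2 * Wc n = n*(n+1) := by rw [wc_sum]; exact gauss0 n

lemma pyr_closed (n : ℕ) : 6 * Pyr n = n*(n+1)*(2*n+1) := by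
  induction n with
  | zero => simp [Pyr]
  | succ k ih => rw [Pyr, sum_range_succ, ← Pyr, mul_add, ih]; ring

lemma ts_rec (n : ℕ) :
    TS (n+1) + TS n + 3*((n+2) * Wc (n+1)) = (n+2)^3 + 3 * Pyr (n+1) := by
  set N := n + 1 with hN
  set U : Finset (ℕ × ℕ × ℕ) := Bx N ×ˢ Bx N ×ˢ Bx N with hU
  set A := U.filter (fun p => N+1 ≤ p.1 + p.2.1) with hA
  set B := U.filter (fun p => N+1 ≤ p.1 + p.2.2) with hB
  set C := U.filter (fun p => N+1 ≤ p.2.1 + p.2.2) with hC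
  -- split
  have hsplit : TS N + (U.filter (fun p =>
      ¬(p.1 + p.2.1 ≤ N ∧ p.1 + p.2.2 ≤ N ∧ p.2.1 + p.2.2 ≤ N))).card = U.card := by
    rw [TS]
    exact Finset.card_filter_add_card_filter_not _
  have cardU : U.card = (N+1)^3 := by
    rw [hU, Finset.card_product, Finset.card_product, card_Bx]; ring
  have hneg : U.filter (fun p =>
      ¬(p.1 + p.2.1 ≤ N ∧ p.1 + p.2.2 ≤ N ∧ p.2.1 + p.2.2 ≤ N)) = A ∪ B ∪ C := by
    ext ⟨x, y, z⟩
    simp only [hA, hB, hC, hU, mem_filter, mem_union, mem_product, mem_Bx]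
    omega
  -- card A
  have cardA : A.card = (N+1) * Wc N := by
    rw [hA, hU, card_filter_prod]
    have : ∀ x ∈ Bx N, (((Bx N ×ˢ Bx N)).filter
        (fun b => N + 1 ≤ (x, b).1 + (x, b).2.1)).card = x * (N+1) := by
      intro x hx
      rw [mem_Bx] at hx
      rw [show ((Bx N ×ˢ Bx N)).filter (fun b => N + 1 ≤ (x, b).1 + (x, b).2.1)
          = ((Bx N).filter (fun y => N+1 ≤ x + y)) ×ˢ Bx N from
        filter_prod_left (Bx N) (Bx N) (fun y => N+1 ≤ x + y)]
      rw [Finset.card_product, cnt_lemma N x hx, card_Bx]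
    rw [sum_congr rfl this, ← sum_mul, show ∑ x ∈ Bx N, x = Wc N from (wc_sum N).symm]
    ring
  -- card B = card A via swap of last two coordinates
  have cardB : B.card = A.card := by
    refine Finset.card_bij' (fun p _ => (p.1, p.2.2, p.2.1)) (fun p _ => (p.1, p.2.2, p.2.1))
      ?_ ?_ ?_ ?_ <;> intro p hp <;> obtain ⟨x, y, z⟩ := p <;>
      simp [hA, hB, hU, mem_Bx] at hp ⊢ <;> omega
  have cardC : C.card = A.card := by
    refine Finset.card_bij' (fun p _ => (p.2.1, p.2.2, p.1)) (fun p _ => (p.2.2, p.1, p.2.1))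
      ?_ ?_ ?_ ?_ <;> intro p hp <;> obtain ⟨x, y, z⟩ := p <;>
      simp [hA, hC, hU, mem_Bx] at hp ⊢ <;> omega
  -- card (A ∩ B) = Pyr N
  have hABset : A ∩ B = U.filter (fun p => N+1 ≤ p.1 + p.2.1 ∧ N+1 ≤ p.1 + p.2.2) := by
    ext ⟨x, y, z⟩
    simp only [hA, hB, hU, mem_inter, mem_filter, mem_product, mem_Bx]
    omega
  have cardAB : (A ∩ B).card = Pyr N := by
    rw [hABset, hU, card_filter_prod]
    have : ∀ x ∈ Bx N, (((Bx N ×ˢ Bx N)).filter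
        (fun b => N + 1 ≤ (x, b).1 + (x, b).2.1 ∧ N + 1 ≤ (x, b).1 + (x, b).2.2)).card
        = x * x := by
      intro x hx
      rw [mem_Bx] at hx
      rw [show ((Bx N ×ˢ Bx N)).filter
          (fun b => N + 1 ≤ (x, b).1 + (x, b).2.1 ∧ N + 1 ≤ (x, b).1 + (x, b).2.2)
          = ((Bx N).filter (fun y => N+1 ≤ x + y)) ×ˢ ((Bx N).filter (fun y => N+1 ≤ x + y)) by
        ext ⟨a, b⟩
        simp only [mem_filter, mem_product, mem_Bx]
        omega]
      rw [Finset.card_product, cnt_lemma N x hx]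
    rw [sum_congr rfl this]
    rfl
  have cardAC : (A ∩ C).card = (A ∩ B).card := by
    refine Finset.card_bij' (fun p _ => (p.2.1, p.1, p.2.2)) (fun p _ => (p.2.1, p.1, p.2.2))
      ?_ ?_ ?_ ?_ <;> intro p hp <;> obtain ⟨x, y, z⟩ := p <;>
      simp [hA, hB, hC, hU, mem_Bx] at hp ⊢ <;> omega
  have cardBC : (B ∩ C).card = (A ∩ B).card := by
    refine Finset.card_bij' (fun p _ => (p.2.2, p.1, p.2.1)) (fun p _ => (p.2.1, p.2.2, p.1))
      ?_ ?_ ?_ ?_ <;> intro p hp <;> obtain ⟨x, y, z⟩ := p <;>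
      simp [hA, hB, hC, hU, mem_Bx] at hp ⊢ <;> omega
  -- card (A ∩ B ∩ C) = TS n
  have cardABC : (A ∩ B ∩ C).card = TS n := by
    rw [TS]
    refine Finset.card_bij' (fun p _ => (N - p.1, N - p.2.1, N - p.2.2))
      (fun p _ => (N - p.1, N - p.2.1, N - p.2.2)) ?_ ?_ ?_ ?_ <;> intro p hp <;>
      obtain ⟨x, y, z⟩ := p <;>
      simp [hA, hB, hC, hU, mem_Bx, Prod.ext_iff] at hp ⊢ <;> omega
  -- union algebra
  have h1 : (A ∪ B ∪ C).card + ((A ∪ B) ∩ C).card = (A ∪ B).card + C.card :=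
    Finset.card_union_add_card_inter _ _
  have h2 : (A ∪ B).card + (A ∩ B).card = A.card + B.card :=
    Finset.card_union_add_card_inter _ _
  have h3 : (A ∪ B) ∩ C = (A ∩ C) ∪ (B ∩ C) := Finset.union_inter_distrib_right _ _ _
  have h4 : ((A ∩ C) ∪ (B ∩ C)).card + ((A ∩ C) ∩ (B ∩ C)).card
      = (A ∩ C).card + (B ∩ C).card := Finset.card_union_add_card_inter _ _
  have h5 : (A ∩ C) ∩ (B ∩ C) = A ∩ B ∩ C := by
    ext p; simp only [mem_inter]; tauto
  rw [hneg] at hsplit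
  rw [h3] at h1
  rw [h5] at h4
  have key : TS N + TS n + 3 * ((N+1) * Wc N) = (N+1)^3 + 3 * Pyr N := by
    omega
  have h6 : N + 1 = n + 2 := rfl
  rw [h6] at key
  exact key

lemma ts_closed : ∀ r : ℕ,
    24 * TS (2*r) = 24 + 84*r + 108*r^2 + 48*r^3 ∧
    24 * TS (2*r+1) = 96 + 228*r + 180*r^2 + 48*r^3 := by
  intro r
  induction r with
  | zero =>
    constructor
    · show 24 * TS 0 = 24
      rfl
    · show 24 * TS 1 = 96
      rfl
  | succ r ih =>
    have h2 := ts_rec (2*r+1)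
    have h3 := ts_rec (2*r+2)
    have hw2 := w_closed (2*r+2)
    have hw3 := w_closed (2*r+3)
    have hp2 := pyr_closed (2*r+2)
    have hp3 := pyr_closed (2*r+3)
    have ih2 := ih.2
    have e2 : 2*r+1+1 = 2*r+2 := rfl
    have e3 : 2*r+2+1 = 2*r+3 := rfl
    rw [e2] at h2
    rw [e3] at h3
    have key1 : 24 * TS (2*r+2) = 24 + 84*(r+1) + 108*(r+1)^2 + 48*(r+1)^3 := by
      zify at h2 hw2 hp2 ih2 ⊢
      linear_combination (24:ℤ)*h2 - ih2 - 36*(2*r+3)*hw2 + 12*hp2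
    have key2 : 24 * TS (2*r+3) = 96 + 228*(r+1) + 180*(r+1)^2 + 48*(r+1)^3 := by
      zify at h3 hw3 hp3 key1 ⊢
      linear_combination (24:ℤ)*h3 - key1 - 36*(2*r+4)*hw3 + 12*hp3
    constructor
    · have : 2*(r+1) = 2*r+2 := by ring
      rw [this]; exact key1
    · have : 2*(r+1)+1 = 2*r+3 := by ring
      rw [this]; exact key2

def STf (m : ℕ) : ℕ := ∑ n ∈ range (m+1), TS n

lemma st_closed : ∀ r : ℕ,
    24 * STf (2*r) = 24 + 96*r + 144*r^2 + 96*r^3 + 24*r^4 ∧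
    24 * STf (2*r+1) = 120 + 324*r + 324*r^2 + 144*r^3 + 24*r^4 := by
  intro r
  induction r with
  | zero =>
    constructor
    · show 24 * STf 0 = 24
      rfl
    · show 24 * STf 1 = 120
      rfl
  | succ r ih =>
    have hts := ts_closed (r+1)
    have hts1 := hts.1
    have hts2 := hts.2
    have e1 : 2*(r+1) = 2*r+2 := by ring
    have e2 : 2*(r+1)+1 = 2*r+3 := by ring
    rw [e1] at hts1
    rw [e2] at hts2
    have ih2 := ih.2
    have hs1 : STf (2*r+2) = STf (2*r+1) + TS (2*r+2) := by
      rw [STf, STf, sum_range_succ]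
    have hs2 : STf (2*r+3) = STf (2*r+2) + TS (2*r+3) := by
      rw [STf, STf, sum_range_succ]
    have key1 : 24 * STf (2*r+2) = 24 + 96*(r+1) + 144*(r+1)^2 + 96*(r+1)^3 + 24*(r+1)^4 := by
      zify at hs1 ih2 hts1 ⊢
      linear_combination (24:ℤ)*hs1 + ih2 + hts1
    have key2 : 24 * STf (2*r+3) = 120 + 324*(r+1) + 324*(r+1)^2 + 144*(r+1)^3 + 24*(r+1)^4 := by
      zify at hs2 key1 hts2 ⊢
      linear_combination (24:ℤ)*hs2 + key1 + hts2
    constructor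
    · rw [e1]; exact key1
    · rw [e2]; exact key2

lemma qe_closed : ∀ r : ℕ,
    6 * ∑ t ∈ range r, TetS (2*t+1) = 4*r + 10*r^2 + 8*r^3 + 2*r^4 := by
  intro r
  induction r with
  | zero => simp
  | succ r ih =>
    have ht := tetS_closed (2*r+1)
    rw [sum_range_succ, mul_add, ih]
    zify at ht ⊢
    linear_combination ht

lemma qo_closed : ∀ r : ℕ,
    6 * ∑ t ∈ range (r+1), TetS (2*t) = 6 + 21*r + 25*r^2 + 12*r^3 + 2*r^4 := by
  intro r
  induction r with
  | zero =>
    show 6 * (0 + TetS 0) = 6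
    rfl
  | succ r ih =>
    have ht := tetS_closed (2*(r+1))
    rw [sum_range_succ, mul_add, ih]
    zify at ht ⊢
    linear_combination ht

def Fq (m : ℕ) : Finset (ℕ × ℕ × ℕ × ℕ) :=
  (Bx m ×ˢ Bx m ×ˢ Bx m ×ˢ Bx m).filter (fun p =>
    p.1 + p.2.1 + p.2.2.1 ≤ m ∧ p.1 + p.2.1 + p.2.2.2 ≤ m ∧
    p.1 + p.2.2.1 + p.2.2.2 ≤ m ∧ m ≤ 2*p.1 + p.2.1 + p.2.2.1 + p.2.2.2)

def Qs (m : ℕ) : Finset (ℕ × ℕ × ℕ × ℕ) :=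
  (Bx m ×ˢ Bx m ×ˢ Bx m ×ˢ Bx m).filter (fun p =>
    2*p.1 + p.2.1 + p.2.2.1 + p.2.2.2 + 1 ≤ m)

lemma fq_sum (m : ℕ) : (Fq m).card + (Qs m).card = STf m := by
  have hF : (Fq m).card = ∑ t ∈ Bx m, ((Bx m ×ˢ Bx m ×ˢ Bx m).filter (fun b =>
      t + b.1 + b.2.1 ≤ m ∧ t + b.1 + b.2.2 ≤ m ∧
      t + b.2.1 + b.2.2 ≤ m ∧ m ≤ 2*t + b.1 + b.2.1 + b.2.2)).card := by
    rw [Fq, card_filter_prod]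
  have hQ : (Qs m).card = ∑ t ∈ Bx m, ((Bx m ×ˢ Bx m ×ˢ Bx m).filter (fun b =>
      2*t + b.1 + b.2.1 + b.2.2 + 1 ≤ m)).card := by
    rw [Qs, card_filter_prod]
  rw [hF, hQ, ← Finset.sum_add_distrib]
  have key : ∀ t ∈ Bx m, ((Bx m ×ˢ Bx m ×ˢ Bx m).filter (fun b =>
      t + b.1 + b.2.1 ≤ m ∧ t + b.1 + b.2.2 ≤ m ∧
      t + b.2.1 + b.2.2 ≤ m ∧ m ≤ 2*t + b.1 + b.2.1 + b.2.2)).card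
      + ((Bx m ×ˢ Bx m ×ˢ Bx m).filter (fun b =>
      2*t + b.1 + b.2.1 + b.2.2 + 1 ≤ m)).card = TS (m - t) := by
    intro t ht
    rw [mem_Bx] at ht
    set n := m - t with hn
    set TT : Finset (ℕ × ℕ × ℕ) := (Bx n ×ˢ Bx n ×ˢ Bx n).filter
      (fun p => p.1 + p.2.1 ≤ n ∧ p.1 + p.2.2 ≤ n ∧ p.2.1 + p.2.2 ≤ n) with hTT
    have e1 : (Bx m ×ˢ Bx m ×ˢ Bx m).filter (fun b =>
        t + b.1 + b.2.1 ≤ m ∧ t + b.1 + b.2.2 ≤ m ∧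
        t + b.2.1 + b.2.2 ≤ m ∧ m ≤ 2*t + b.1 + b.2.1 + b.2.2)
        = TT.filter (fun b => m ≤ 2*t + b.1 + b.2.1 + b.2.2) := by
      ext ⟨x, y, z⟩
      simp only [hTT, mem_filter, mem_product, mem_Bx]
      omega
    have e2 : (Bx m ×ˢ Bx m ×ˢ Bx m).filter (fun b =>
        2*t + b.1 + b.2.1 + b.2.2 + 1 ≤ m)
        = TT.filter (fun b => ¬ (m ≤ 2*t + b.1 + b.2.1 + b.2.2)) := by
      ext ⟨x, y, z⟩
      simp only [hTT, mem_filter, mem_product, mem_Bx]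
      omega
    rw [e1, e2, Finset.card_filter_add_card_filter_not]
    rfl
  rw [sum_congr rfl key]
  rw [STf, show (Bx m) = range (m+1) from rfl]
  rw [← Finset.sum_range_reflect (fun j => TS j) (m+1)]
  apply sum_congr rfl
  intro t ht
  rfl

lemma q_sum (m : ℕ) :
    (Qs m).card = ∑ t ∈ range (m+1), (if 2*t < m then TetS (m-1-2*t) else 0) := by
  rw [Qs, card_filter_prod]
  apply sum_congr rfl
  intro t ht
  rw [mem_Bx] at ht
  show ((Bx m ×ˢ Bx m ×ˢ Bx m).filter (fun b =>
      2*t + b.1 + b.2.1 + b.2.2 + 1 ≤ m)).card = _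
  by_cases h : 2*t < m
  · rw [if_pos h]
    rw [show (Bx m ×ˢ Bx m ×ˢ Bx m).filter (fun b =>
        2*t + b.1 + b.2.1 + b.2.2 + 1 ≤ m)
        = (Bx (m-1-2*t) ×ˢ Bx (m-1-2*t) ×ˢ Bx (m-1-2*t)).filter
          (fun p => p.1 + p.2.1 + p.2.2 ≤ m-1-2*t) by
      ext ⟨x, y, z⟩
      simp only [mem_filter, mem_product, mem_Bx]
      omega]
    rfl
  · rw [if_neg h]
    rw [Finset.card_eq_zero, Finset.filter_eq_empty_iff]
    rintro ⟨x, y, z⟩ _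
    omega

/-- `N d a b c` is the number of 2×2×2 arrays of non-negative integers with total
sum `d` whose slice sums in the three directions differ by `a`, `b`, `c`
respectively; it is the dimension of the weight space `W(d;a,b,c)`. -/
noncomputable def N (d a b c : ℕ) : ℕ :=
  Set.ncard {e : Fin 2 × Fin 2 × Fin 2 → ℕ |
    (∑ i : Fin 2, ∑ j : Fin 2, ∑ k : Fin 2, e (i, j, k)) = d ∧
    (∑ j : Fin 2, ∑ k : Fin 2, e (0, j, k)) = (∑ j : Fin 2, ∑ k : Fin 2, e (1, j, k)) + a ∧
    (∑ i : Fin 2, ∑ k : Fin 2, e (i, 0, k)) = (∑ i : Fin 2, ∑ k : Fin 2, e (i, 1, k)) + b ∧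
    (∑ i : Fin 2, ∑ j : Fin 2, e (i, j, 0)) = (∑ i : Fin 2, ∑ j : Fin 2, e (i, j, 1)) + c}


def gf (m t x y z : ℕ) : Fin 2 × Fin 2 × Fin 2 → ℕ :=
  fun p => ![![![t, x], ![y, m - t - x - y]],
             ![![z, m - t - x - z],
               ![m - t - y - z, 2*t + x + y + z - m]]] p.1 p.2.1 p.2.2

def gfun (m : ℕ) (q : ℕ × ℕ × ℕ × ℕ) : Fin 2 × Fin 2 × Fin 2 → ℕ :=
  gf m q.1 q.2.1 q.2.2.1 q.2.2.2

lemma n_odd (d : ℕ) (hd : Odd d) : N d 0 0 0 = 0 := by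
  rw [N]
  rw [show {e : Fin 2 × Fin 2 × Fin 2 → ℕ | _ ∧ _ ∧ _ ∧ _} = (∅ : Set _) from ?_]
  · exact Set.ncard_empty _
  · ext e
    simp only [Set.mem_setOf_eq, Set.mem_empty_iff_false, iff_false, not_and]
    intro h1 h2 _ _
    simp only [Fin.sum_univ_two, add_zero] at h1 h2
    obtain ⟨k, hk⟩ := hd
    omega

lemma n_even (m : ℕ) : N (2*m) 0 0 0 = (Fq m).card := by
  rw [N]
  have hset : {e : Fin 2 × Fin 2 × Fin 2 → ℕ |
      (∑ i : Fin 2, ∑ j : Fin 2, ∑ k : Fin 2, e (i, j, k)) = 2*m ∧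
      (∑ j : Fin 2, ∑ k : Fin 2, e (0, j, k)) = (∑ j : Fin 2, ∑ k : Fin 2, e (1, j, k)) + 0 ∧
      (∑ i : Fin 2, ∑ k : Fin 2, e (i, 0, k)) = (∑ i : Fin 2, ∑ k : Fin 2, e (i, 1, k)) + 0 ∧
      (∑ i : Fin 2, ∑ j : Fin 2, e (i, j, 0)) = (∑ i : Fin 2, ∑ j : Fin 2, e (i, j, 1)) + 0}
      = ↑((Fq m).image (gfun m)) := by
    ext e
    simp only [Set.mem_setOf_eq, Finset.coe_image, Set.mem_image, Finset.mem_coe]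
    constructor
    · rintro ⟨h1, h2, h3, h4⟩
      simp only [Fin.sum_univ_two, add_zero] at h1 h2 h3 h4
      refine ⟨(e (0,0,0), e (0,0,1), e (0,1,0), e (1,0,0)), ?_, ?_⟩
      · simp only [Fq, mem_filter, mem_product, mem_Bx]
        omega
      · show gf m (e (0,0,0)) (e (0,0,1)) (e (0,1,0)) (e (1,0,0)) = e
        funext p
        obtain ⟨i, j, k⟩ := p
        fin_cases i <;> fin_cases j <;> fin_cases k <;>
          simp [gf, -Prod.mk_zero_zero, -Prod.mk_one_one] <;> omega
    · rintro ⟨q, hq, rfl⟩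
      obtain ⟨t, x, y, z⟩ := q
      simp only [Fq, mem_filter, mem_product, mem_Bx] at hq
      show (_ ∧ _ ∧ _ ∧ _)
      refine ⟨?_, ?_, ?_, ?_⟩ <;>
        · show _ = _
          simp only [Fin.sum_univ_two, add_zero]
          simp [gfun, gf, -Prod.mk_zero_zero, -Prod.mk_one_one]
          omega
  rw [hset, Set.ncard_coe_finset]
  apply Finset.card_image_of_injOn
  intro q1 h1 q2 h2 heq
  obtain ⟨t1, x1, y1, z1⟩ := q1
  obtain ⟨t2, x2, y2, z2⟩ := q2
  have e1 := congrFun heq (0,0,0)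
  have e2 := congrFun heq (0,0,1)
  have e3 := congrFun heq (0,1,0)
  have e4 := congrFun heq (1,0,0)
  simp [gfun, gf, -Prod.mk_zero_zero, -Prod.mk_one_one] at e1 e2 e3 e4
  simp only [Prod.mk.injEq]
  exact ⟨e1, e2, e3, e4⟩

/-- Dimension formulas for the zero weight space `W(d;0,0,0)`. -/
theorem dim_weight_space_000 (d : ℕ) :
    (d % 4 = 0 → 384 * N d 0 0 0 = (d + 4) ^ 2 * (d ^ 2 + 8 * d + 24)) ∧
    (d % 4 = 2 → 384 * N d 0 0 0 = (d + 2) * (d + 6) * (d ^ 2 + 8 * d + 28)) ∧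
    (Odd d → N d 0 0 0 = 0) := by
  refine ⟨?_, ?_, fun hd => n_odd d hd⟩
  · intro h4
    obtain ⟨r, rfl⟩ : ∃ r, d = 4*r := ⟨d/4, by omega⟩
    have hm : (4*r) = 2*(2*r) := by ring
    rw [hm, n_even (2*r)]
    have hfq := fq_sum (2*r)
    have hst := (st_closed r).1
    have hq2 : (Qs (2*r)).card = ∑ t ∈ range r, TetS (2*t+1) := by
      rw [q_sum]
      rw [← Finset.sum_subset (show range r ⊆ range (2*r+1) from
            range_subset_range.mpr (by omega))
          (fun x hx hnx => by
            simp only [mem_range, not_lt] at hnx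
            rw [if_neg (by omega)])]
      rw [← Finset.sum_range_reflect (fun t => TetS (2*t+1)) r]
      apply sum_congr rfl
      intro t ht
      simp only [mem_range] at ht
      rw [if_pos (by omega)]
      congr 1
      omega
    have hq6 : 6 * (Qs (2*r)).card = 4*r + 10*r^2 + 8*r^3 + 2*r^4 := by
      rw [hq2]; exact qe_closed r
    zify at hfq hst hq6 ⊢
    linear_combination (384:ℤ)*hfq + 16*hst - 64*hq6
  · intro h4
    obtain ⟨r, rfl⟩ : ∃ r, d = 4*r+2 := ⟨d/4, by omega⟩
    have hm : (4*r+2) = 2*(2*r+1) := by ring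
    rw [hm, n_even (2*r+1)]
    have hfq := fq_sum (2*r+1)
    have hst := (st_closed r).2
    have hq2 : (Qs (2*r+1)).card = ∑ t ∈ range (r+1), TetS (2*t) := by
      rw [q_sum]
      rw [← Finset.sum_subset (show range (r+1) ⊆ range (2*r+1+1) from
            range_subset_range.mpr (by omega))
          (fun x hx hnx => by
            simp only [mem_range, not_lt] at hnx
            rw [if_neg (by omega)])]
      rw [← Finset.sum_range_reflect (fun t => TetS (2*t)) (r+1)]
      apply sum_congr rfl
      intro t ht
      simp only [mem_range] at ht
      rw [if_pos (by omega)]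
      congr 1
      omega
    have hq6 : 6 * (Qs (2*r+1)).card = 6 + 21*r + 25*r^2 + 12*r^3 + 2*r^4 := by
      rw [hq2]; exact qo_closed r
    zify at hfq hst hq6 ⊢
    linear_combination (384:ℤ)*hfq + 16*hst - 64*hq6
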